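/- arXiv:1002.4647 — 4 statements merged into one kernel-verified Lean document; each statement's English description precedes it below -/
import Mathlib

section
/- The function u(θ) = ∫₀^θ √(1 + cos²t)/cos t dt + θ, defined for 0 < θ < π/2, satisfies u_θ = √(1+cos²θ)/cos θ + 1, tends to 0 as θ → 0⁺, and tends to +∞ as θ → (π/2)⁻; moreover it satisfies the first integral (1 − sin²θ)(u_θ² − 2u_θ) = 1. -/
/-!
On `(-π/2, π/2)` the integrand is continuous, so `u' = √(1 + cos²θ)/cos θ + 1` by the fundamental
theorem of calculus; in particular `u` is continuous at `0`, where it vanishes. Since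
`√(1 + cos²θ) ≥ 1 ≥ sin θ`, this derivative dominates `tan θ = (-log cos θ)'`, so
`u ≥ -log cos` on `[0, π/2)`, which blows up at `π/2`. The first integral is the identity
`(a + 1)² - 2(a + 1) = a² - 1` with `a² = (1 + cos²θ)/cos²θ` and `1 - sin²θ = cos²θ`.
-/

open Real Set Filter

/-- The invariant minimal-graph solution with parameter C = 1 over the first quadrant:
u(θ) = ∫₀^θ √(1 + cos²t)/cos t dt + θ. -/
noncomputable def uC1 (θ : ℝ) : ℝ :=
  (∫ t in (0:ℝ)..θ, Real.sqrt (1 + Real.cos t ^ 2) / Real.cos t) + θ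

open Topology

lemma continuousOn_sqrt_one_add_cos_sq_div_cos :
    ContinuousOn (fun t => √(1 + cos t ^ 2) / cos t) (Ioo (-(π / 2)) (π / 2)) :=
  (by fun_prop : Continuous fun t => √(1 + cos t ^ 2)).continuousOn.div
    continuous_cos.continuousOn fun _ ht => (cos_pos_of_mem_Ioo ht).ne'

lemma hasDerivAt_uC1 {θ : ℝ} (hθ : θ ∈ Ioo (-(π / 2)) (π / 2)) :
    HasDerivAt uC1 (√(1 + cos θ ^ 2) / cos θ + 1) θ := by
  have hopen : IsOpen (Ioo (-(π / 2)) (π / 2)) := isOpen_Ioo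
  have hzero : (0 : ℝ) ∈ Ioo (-(π / 2)) (π / 2) := ⟨by linarith [pi_pos], by linarith [pi_pos]⟩
  have hint := (continuousOn_sqrt_one_add_cos_sq_div_cos.mono
    (ordConnected_Ioo.uIcc_subset hzero hθ)).intervalIntegrable (μ := MeasureTheory.volume)
  exact (intervalIntegral.integral_hasDerivAt_right hint
    (continuousOn_sqrt_one_add_cos_sq_div_cos.stronglyMeasurableAtFilter hopen θ hθ)
    (continuousOn_sqrt_one_add_cos_sq_div_cos.continuousAt (hopen.mem_nhds hθ))).add
    (hasDerivAt_id θ)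

lemma tendsto_uC1_nhdsGT_zero : Tendsto uC1 (𝓝[>] 0) (𝓝 0) := by
  have hcont : ContinuousAt uC1 0 :=
    (hasDerivAt_uC1 ⟨by linarith [pi_pos], by linarith [pi_pos]⟩).continuousAt
  simpa [uC1] using hcont.continuousWithinAt.tendsto (s := Ioi 0)

lemma tan_le_sqrt_one_add_cos_sq_div_cos {x : ℝ} (hx : 0 < cos x) :
    tan x ≤ √(1 + cos x ^ 2) / cos x := by
  have hsqrt : 1 ≤ √(1 + cos x ^ 2) := one_le_sqrt.mpr (by nlinarith)
  rw [tan_eq_sin_div_cos]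
  gcongr
  exact (sin_le_one x).trans hsqrt

lemma monotoneOn_uC1_add_log_cos :
    MonotoneOn (fun θ => uC1 θ + log (cos θ)) (Ioo (-(π / 2)) (π / 2)) := by
  have hderiv : ∀ θ ∈ Ioo (-(π / 2)) (π / 2), HasDerivAt (fun θ => uC1 θ + log (cos θ))
      (√(1 + cos θ ^ 2) / cos θ + 1 - tan θ) θ := fun θ hθ => by
    have hlog := (hasDerivAt_cos θ).log (cos_pos_of_mem_Ioo hθ).ne'
    exact ((hasDerivAt_uC1 hθ).add hlog).congr_deriv (by rw [tan_eq_sin_div_cos]; ring)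
  refine monotoneOn_of_hasDerivWithinAt_nonneg (convex_Ioo _ _)
    (f' := fun θ => √(1 + cos θ ^ 2) / cos θ + 1 - tan θ)
    (fun θ hθ => (hderiv θ hθ).continuousAt.continuousWithinAt) ?_ ?_ <;>
    rw [interior_Ioo] <;> intro θ hθ
  · exact (hderiv θ hθ).hasDerivWithinAt
  · linarith [tan_le_sqrt_one_add_cos_sq_div_cos (cos_pos_of_mem_Ioo hθ)]

lemma neg_log_cos_le_uC1 {θ : ℝ} (hθ : θ ∈ Ico 0 (π / 2)) : -log (cos θ) ≤ uC1 θ := by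
  have hmono := monotoneOn_uC1_add_log_cos (a := 0) ⟨by linarith [pi_pos], by linarith [pi_pos]⟩
    ⟨by linarith [pi_pos, hθ.1], hθ.2⟩ hθ.1
  have hzero : uC1 0 = 0 := by simp [uC1]
  simp only [hzero, cos_zero, log_one, add_zero] at hmono
  linarith

lemma tendsto_uC1_nhdsLT_pi_div_two : Tendsto uC1 (𝓝[<] (π / 2)) atTop := by
  have hlog : Tendsto (fun θ => -log (cos θ)) (𝓝[<] (π / 2)) atTop :=
    tendsto_neg_atBot_atTop.comp (tendsto_log_nhdsGT_zero.comp tendsto_cos_pi_div_two)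
  refine tendsto_atTop_mono' _ ?_ hlog
  filter_upwards [Ioo_mem_nhdsLT (by linarith [pi_pos] : (0 : ℝ) < π / 2)] with θ hθ
  exact neg_log_cos_le_uC1 (Ioo_subset_Ico_self hθ)

lemma one_sub_sin_sq_mul_first_integral {θ : ℝ} (hθ : cos θ ≠ 0) :
    (1 - sin θ ^ 2) * ((√(1 + cos θ ^ 2) / cos θ + 1) ^ 2 - 2 * (√(1 + cos θ ^ 2) / cos θ + 1))
      = 1 := by
  have hsqrt : √(1 + cos θ ^ 2) ^ 2 = 1 + cos θ ^ 2 := sq_sqrt (by positivity)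
  rw [← cos_sq']
  field_simp
  linear_combination hsqrt

/-- The function u(θ) = ∫₀^θ √(1+cos²t)/cos t dt + θ on (0, π/2) satisfies
u_θ = √(1+cos²θ)/cos θ + 1, tends to 0 as θ → 0⁺ and to +∞ as θ → (π/2)⁻, and obeys the
first integral (1 − sin²θ)(u_θ² − 2u_θ) = 1. -/
theorem stmt_6 :
    (∀ θ ∈ Ioo 0 (π / 2),
      HasDerivAt uC1 (Real.sqrt (1 + Real.cos θ ^ 2) / Real.cos θ + 1) θ) ∧
    Tendsto uC1 (nhdsWithin 0 (Ioi 0)) (nhds 0) ∧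
    Tendsto uC1 (nhdsWithin (π / 2) (Iio (π / 2))) atTop ∧
    (∀ θ ∈ Ioo 0 (π / 2),
      (1 - Real.sin θ ^ 2) *
        ((Real.sqrt (1 + Real.cos θ ^ 2) / Real.cos θ + 1) ^ 2
          - 2 * (Real.sqrt (1 + Real.cos θ ^ 2) / Real.cos θ + 1)) = 1) := by
  have hsub : Ioo 0 (π / 2) ⊆ Ioo (-(π / 2)) (π / 2) :=
    Ioo_subset_Ioo_left (by linarith [pi_pos])
  refine ⟨fun θ hθ => hasDerivAt_uC1 (hsub hθ), tendsto_uC1_nhdsGT_zero,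
    tendsto_uC1_nhdsLT_pi_div_two, fun θ hθ => ?_⟩
  exact one_sub_sin_sq_mul_first_integral (cos_pos_of_mem_Ioo (hsub hθ)).ne'
end

section
/- Let u be a C² solution of the minimal surface equation in PSL₂(ℝ)~ over the upper half-plane that depends only on y, i.e. u(x,y) = u(y) for y > 0. Then ω u_yy − (1/2) u_y ω_y = 0 where ω = 2 + y² u_y², and hence either u is constant or u_y = ±√2/√(C² − y²) for some constant C > 0; in the latter case u(y) = ±√2 · arcsin(y/C) + const on 0 < y < C. -/
open Real Set

noncomputable def pdx (f : ℝ × ℝ → ℝ) (p : ℝ × ℝ) : ℝ := fderiv ℝ f p (1, 0)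
noncomputable def pdy (f : ℝ × ℝ → ℝ) (p : ℝ × ℝ) : ℝ := fderiv ℝ f p (0, 1)

/-- ω(y) = 2 + y² u_y² for a solution u = u(y) depending only on y. -/
noncomputable def omegaPar (u : ℝ → ℝ) (y : ℝ) : ℝ :=
  2 + y ^ 2 * (deriv u y) ^ 2

open Topology

/-! The minimal surface equation for `u = u(y)` is a divergence `∂ₓ(λα/W) + ∂_y(λβ/W) = 0` whose
`x`-term vanishes because `λα/W = -1/(y√ω)` depends on `y` alone, while `λβ/W = -u_y/√ω`.
Hence `u_y/√ω` is a first integral `k`, and its derivative `(ω u_yy - ½ u_y ω_y)/ω^{3/2}` vanishing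
is the stated ODE. Squaring `u_y = k√(2 + y²u_y²)` gives `u_y² = 2/(C² - y²)` with `C = 1/|k|`
(or `u_y = 0` when `k = 0`), and `√2·arcsin(y/C)` is an antiderivative of `√2/√(C² - y²)`. -/

lemma fderiv_comp_snd (g : ℝ → ℝ) (p : ℝ × ℝ) :
    fderiv ℝ (fun q : ℝ × ℝ => g q.2) p = deriv g p.2 • ContinuousLinearMap.snd ℝ ℝ ℝ := by
  by_cases hg : DifferentiableAt ℝ g p.2
  · exact (hg.hasDerivAt.comp_hasFDerivAt p hasFDerivAt_snd).fderiv
  · have hG : ¬ DifferentiableAt ℝ (fun q : ℝ × ℝ => g q.2) p := fun h =>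
      hg (h.comp (f := fun t : ℝ => (p.1, t)) p.2
        ((differentiableAt_const p.1).prodMk differentiableAt_id))
    rw [fderiv_zero_of_not_differentiableAt hG, deriv_zero_of_not_differentiableAt hg, zero_smul]

lemma pdx_comp_snd (g : ℝ → ℝ) (p : ℝ × ℝ) : pdx (fun q => g q.2) p = 0 := by
  simp [pdx, fderiv_comp_snd]

lemma pdy_comp_snd (g : ℝ → ℝ) (p : ℝ × ℝ) : pdy (fun q => g q.2) p = deriv g p.2 := by
  simp [pdy, fderiv_comp_snd]

lemma HasDerivAt.div_sqrt {f w : ℝ → ℝ} {f' w' y : ℝ} (hf : HasDerivAt f f' y)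
    (hw : HasDerivAt w w' y) (hpos : 0 < w y) :
    HasDerivAt (fun t => f t / √(w t)) ((w y * f' - 1 / 2 * f y * w') / (w y * √(w y))) y := by
  have hs : 0 < √(w y) := Real.sqrt_pos.2 hpos
  have h : HasDerivAt (fun t => f t / √(w t))
      ((f' * √(w y) - f y * (w' / (2 * √(w y)))) / √(w y) ^ 2) y :=
    hf.div (hw.sqrt hpos.ne') hs.ne'
  convert h using 1
  field_simp
  rw [Real.sq_sqrt hpos.le]
  ring

lemma omegaPar_pos (u : ℝ → ℝ) (y : ℝ) : 0 < omegaPar u y := by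
  unfold omegaPar
  positivity

lemma differentiableAt_omegaPar {u : ℝ → ℝ} {y : ℝ} (h : DifferentiableAt ℝ (deriv u) y) :
    DifferentiableAt ℝ (omegaPar u) y := by
  unfold omegaPar
  fun_prop

noncomputable def firstIntegral (u : ℝ → ℝ) (y : ℝ) : ℝ :=
  deriv u y / √(omegaPar u y)

lemma firstIntegral_neg (u : ℝ → ℝ) (y : ℝ) :
    firstIntegral (fun t => -u t) y = -firstIntegral u y := by
  simp [firstIntegral, omegaPar, neg_div]

lemma hasDerivAt_firstIntegral {u : ℝ → ℝ} {y : ℝ} (h : DifferentiableAt ℝ (deriv u) y) :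
    HasDerivAt (firstIntegral u)
      ((omegaPar u y * deriv (deriv u) y - 1 / 2 * deriv u y * deriv (omegaPar u) y) /
        (omegaPar u y * √(omegaPar u y))) y :=
  h.hasDerivAt.div_sqrt (differentiableAt_omegaPar h).hasDerivAt (omegaPar_pos u y)

lemma omegaPar_ode_of_deriv_firstIntegral_eq_zero {u : ℝ → ℝ} {y : ℝ}
    (h : DifferentiableAt ℝ (deriv u) y) (h0 : deriv (firstIntegral u) y = 0) :
    omegaPar u y * deriv (deriv u) y - 1 / 2 * deriv u y * deriv (omegaPar u) y = 0 := by
  have hω := omegaPar_pos u y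
  rw [(hasDerivAt_firstIntegral h).deriv, div_eq_zero_iff] at h0
  exact h0.resolve_right (by positivity)

lemma deriv_firstIntegral_eq_zero_of_minimal {U alpha beta W : ℝ × ℝ → ℝ} {u : ℝ → ℝ}
    (halpha : ∀ p, alpha p = -1) (hbeta : ∀ p, beta p = -p.2 * pdy U p)
    (hW : ∀ p, W p = Real.sqrt (1 + alpha p ^ 2 + beta p ^ 2)) (hinv : ∀ p : ℝ × ℝ, U p = u p.2)
    {p : ℝ × ℝ} (hp : 0 < p.2)
    (hmse : pdx (fun q => (1 / q.2) * alpha q / W q) p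
      + pdy (fun q => (1 / q.2) * beta q / W q) p = 0) :
    deriv (firstIntegral u) p.2 = 0 := by
  have hpdyU : ∀ q, pdy U q = deriv u q.2 := fun q => by
    rw [show U = fun q => u q.2 from funext hinv, pdy_comp_snd]
  have hWu : ∀ q, W q = √(omegaPar u q.2) := fun q => by
    rw [hW, halpha, hbeta, hpdyU, omegaPar]
    ring_nf
  have hx : pdx (fun q => (1 / q.2) * alpha q / W q) p = 0 := by
    simp only [halpha, hWu]
    exact pdx_comp_snd (fun t => 1 / t * -1 / √(omegaPar u t)) p
  have hbeta_eq : (fun q => (1 / q.2) * beta q / W q) =ᶠ[𝓝 p] fun q => -firstIntegral u q.2 := by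
    filter_upwards [continuous_snd.isOpen_preimage _ isOpen_Ioi |>.mem_nhds hp] with q hq
    have hq : q.2 ≠ 0 := (mem_Ioi.1 hq).ne'
    rw [hbeta, hWu, hpdyU, firstIntegral]
    field_simp
  have hy : pdy (fun q => (1 / q.2) * beta q / W q) p = -deriv (firstIntegral u) p.2 := by
    rw [pdy, hbeta_eq.fderiv_eq, ← pdy, pdy_comp_snd (fun t => -firstIntegral u t), deriv.fun_neg]
  linarith

lemma sq_lt_and_deriv_eq_of_firstIntegral_eq {u : ℝ → ℝ} {y k : ℝ} (hk : 0 < k)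
    (h : firstIntegral u y = k) : y ^ 2 < k⁻¹ ^ 2 ∧ deriv u y = √2 / √(k⁻¹ ^ 2 - y ^ 2) := by
  have hω := omegaPar_pos u y
  have hs : 0 < √(omegaPar u y) := Real.sqrt_pos.2 hω
  set v := deriv u y
  have hv : v = k * √(omegaPar u y) := (div_eq_iff hs.ne').1 h
  have hvpos : 0 < v := hv ▸ mul_pos hk hs
  have hv2 : v ^ 2 * (1 - k ^ 2 * y ^ 2) = 2 * k ^ 2 := by
    have : v ^ 2 = k ^ 2 * omegaPar u y := by rw [hv, mul_pow, Real.sq_sqrt hω.le]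
    rw [omegaPar] at this
    linear_combination this
  have hky : 0 < 1 - k ^ 2 * y ^ 2 := by
    by_contra! hle
    nlinarith [mul_nonpos_of_nonneg_of_nonpos (sq_nonneg v) hle, pow_pos hk 2]
  have hyk : 0 < k⁻¹ ^ 2 - y ^ 2 := by
    rw [show k⁻¹ ^ 2 - y ^ 2 = (1 - k ^ 2 * y ^ 2) / k ^ 2 by field_simp]
    positivity
  refine ⟨sub_pos.1 hyk, ?_⟩
  have : v ^ 2 = 2 / (k⁻¹ ^ 2 - y ^ 2) := by
    rw [eq_div_iff hyk.ne']
    field_simp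
    linear_combination hv2
  rw [← Real.sqrt_sq hvpos.le, this, Real.sqrt_div zero_le_two]

lemma hasDerivAt_arcsin_div {C y : ℝ} (hC : 0 < C) (hy : y ^ 2 < C ^ 2) :
    HasDerivAt (fun t => arcsin (t / C)) (1 / √(C ^ 2 - y ^ 2)) y := by
  have hyC : |y / C| < 1 := by
    rw [abs_div, abs_of_pos hC, div_lt_one hC]
    exact abs_lt_of_sq_lt_sq hy hC.le
  have h := (Real.hasDerivAt_arcsin (abs_lt.1 hyC).1.ne' (abs_lt.1 hyC).2.ne).comp y
    ((hasDerivAt_id' y).div_const C)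
  refine h.congr_deriv ?_
  rw [show (1 : ℝ) - (y / C) ^ 2 = (C ^ 2 - y ^ 2) / C ^ 2 by field_simp,
    Real.sqrt_div (sub_pos.2 hy).le, Real.sqrt_sq hC.le]
  field_simp

lemma eq_arcsin_of_firstIntegral_eq {u : ℝ → ℝ} {s : Set ℝ} {k : ℝ} (hs : IsOpen s)
    (hs' : IsPreconnected s) (hu : DifferentiableOn ℝ u s) (hk : 0 < k)
    (h : ∀ y ∈ s, firstIntegral u y = k) :
    (∀ y ∈ s, deriv u y = √2 / √(k⁻¹ ^ 2 - y ^ 2)) ∧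
      ∃ K : ℝ, ∀ y ∈ s, u y = √2 * arcsin (y / k⁻¹) + K := by
  have hpt := fun y hy => sq_lt_and_deriv_eq_of_firstIntegral_eq hk (h y hy)
  have harc : ∀ y ∈ s,
      HasDerivAt (fun t => √2 * arcsin (t / k⁻¹)) (√2 / √(k⁻¹ ^ 2 - y ^ 2)) y := fun y hy => by
    simpa only [mul_one_div] using
      (hasDerivAt_arcsin_div (inv_pos.2 hk) (hpt y hy).1).const_mul √2
  obtain ⟨K, hK⟩ := hs.exists_eq_add_of_deriv_eq hs' hu
    (fun y hy => (harc y hy).differentiableAt.differentiableWithinAt)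
    (fun y hy => by rw [(harc y hy).deriv, (hpt y hy).2])
  exact ⟨fun y hy => (hpt y hy).2, K, hK⟩

theorem stmt_9_general (a b : ℝ) (ha : 0 ≤ a)
    (U alpha beta W : ℝ × ℝ → ℝ)
    (halpha : ∀ p, alpha p = -1)
    (hbeta : ∀ p, beta p = -p.2 * pdy U p)
    (hW : ∀ p, W p = Real.sqrt (1 + alpha p ^ 2 + beta p ^ 2))
    (hmse : ∀ p : ℝ × ℝ, a < p.2 → p.2 < b →
      pdx (fun q => (1 / q.2) * alpha q / W q) p
        + pdy (fun q => (1 / q.2) * beta q / W q) p = 0)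
    (u : ℝ → ℝ) (hu : ContDiffOn ℝ 2 u (Ioo a b))
    (hinv : ∀ p : ℝ × ℝ, U p = u p.2) :
    (∀ y ∈ Ioo a b,
      omegaPar u y * deriv (deriv u) y - (1 / 2) * deriv u y * deriv (omegaPar u) y = 0) ∧
    ((∃ c : ℝ, ∀ y ∈ Ioo a b, u y = c) ∨
      ∃ C : ℝ, 0 < C ∧
        (((∀ y ∈ Ioo a b, deriv u y = Real.sqrt 2 / Real.sqrt (C ^ 2 - y ^ 2)) ∧
            ∃ K : ℝ, ∀ y ∈ Ioo a b, u y = Real.sqrt 2 * Real.arcsin (y / C) + K) ∨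
          ((∀ y ∈ Ioo a b, deriv u y = -(Real.sqrt 2 / Real.sqrt (C ^ 2 - y ^ 2))) ∧
            ∃ K : ℝ, ∀ y ∈ Ioo a b, u y = -(Real.sqrt 2 * Real.arcsin (y / C)) + K))) := by
  have hu1 : DifferentiableOn ℝ u (Ioo a b) := hu.differentiableOn two_ne_zero
  have hu2 : ∀ y ∈ Ioo a b, DifferentiableAt ℝ (deriv u) y := fun y hy =>
    ((hu.deriv_of_isOpen (m := 1) isOpen_Ioo (by norm_num)).differentiableOn
      one_ne_zero).differentiableAt (isOpen_Ioo.mem_nhds hy)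
  have hI : ∀ y ∈ Ioo a b, deriv (firstIntegral u) y = 0 := fun y hy =>
    deriv_firstIntegral_eq_zero_of_minimal (p := (0, y)) halpha hbeta hW hinv (ha.trans_lt hy.1)
      (hmse (0, y) hy.1 hy.2)
  refine ⟨fun y hy => omegaPar_ode_of_deriv_firstIntegral_eq_zero (hu2 y hy) (hI y hy), ?_⟩
  obtain ⟨k, hk⟩ := isOpen_Ioo.exists_is_const_of_deriv_eq_zero isPreconnected_Ioo
    (fun y hy => (hasDerivAt_firstIntegral (hu2 y hy)).differentiableAt.differentiableWithinAt) hI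
  rcases lt_trichotomy k 0 with hneg | rfl | hpos
  · obtain ⟨hd, K, hK⟩ := eq_arcsin_of_firstIntegral_eq (u := fun t => -u t) isOpen_Ioo
      isPreconnected_Ioo hu1.neg (neg_pos.2 hneg) fun y hy => by rw [firstIntegral_neg, hk y hy]
    refine Or.inr ⟨(-k)⁻¹, inv_pos.2 (neg_pos.2 hneg), Or.inr ⟨fun y hy => ?_, -K, fun y hy => ?_⟩⟩
    · rw [← hd y hy, deriv.fun_neg, neg_neg]
    · linarith [hK y hy]
  · refine Or.inl <|
      isOpen_Ioo.exists_is_const_of_deriv_eq_zero isPreconnected_Ioo hu1 fun y hy => ?_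
    exact (div_eq_zero_iff.1 (hk y hy)).resolve_right (Real.sqrt_pos.2 (omegaPar_pos u y)).ne'
  · exact Or.inr ⟨k⁻¹, inv_pos.2 hpos,
      Or.inl (eq_arcsin_of_firstIntegral_eq isOpen_Ioo isPreconnected_Ioo hu1 hpos hk)⟩

/-- **Minimal graphs in PSL₂(ℝ)~ invariant under parabolic isometries.**
In the upper half-plane model (λ = 1/y, α = −1, β = −y u_y, W = √(1+α²+β²)), let U be a
C² solution of div_{ℝ²}((λα/W)∂_x + (λβ/W)∂_y) = 0 on the strip {a < y < b} ⊆ {y > 0}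
depending only on y: U(x,y) = u(y).  Then ω u_yy − (1/2) u_y ω_y = 0 with ω = 2 + y²u_y²,
and hence either u is constant or u_y = ±√2/√(C² − y²) for some constant C > 0; in the
latter case u(y) = ±√2·arcsin(y/C) + const. -/
theorem stmt_9 (a b : ℝ) (ha : 0 ≤ a) (hab : a < b)
    (U alpha beta W : ℝ × ℝ → ℝ)
    (hU : ContDiffOn ℝ 2 U {p : ℝ × ℝ | a < p.2 ∧ p.2 < b})
    (halpha : ∀ p, alpha p = -1)
    (hbeta : ∀ p, beta p = -p.2 * pdy U p)
    (hW : ∀ p, W p = Real.sqrt (1 + alpha p ^ 2 + beta p ^ 2))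
    (hmse : ∀ p : ℝ × ℝ, a < p.2 → p.2 < b →
      pdx (fun q => (1 / q.2) * alpha q / W q) p
        + pdy (fun q => (1 / q.2) * beta q / W q) p = 0)
    (u : ℝ → ℝ) (hu : ContDiffOn ℝ 2 u (Ioo a b))
    (hinv : ∀ p : ℝ × ℝ, U p = u p.2) :
    (∀ y ∈ Ioo a b,
      omegaPar u y * deriv (deriv u) y - (1 / 2) * deriv u y * deriv (omegaPar u) y = 0) ∧
    ((∃ c : ℝ, ∀ y ∈ Ioo a b, u y = c) ∨
      ∃ C : ℝ, 0 < C ∧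
        (((∀ y ∈ Ioo a b, deriv u y = Real.sqrt 2 / Real.sqrt (C ^ 2 - y ^ 2)) ∧
            ∃ K : ℝ, ∀ y ∈ Ioo a b, u y = Real.sqrt 2 * Real.arcsin (y / C) + K) ∨
          ((∀ y ∈ Ioo a b, deriv u y = -(Real.sqrt 2 / Real.sqrt (C ^ 2 - y ^ 2))) ∧
            ∃ K : ℝ, ∀ y ∈ Ioo a b, u y = -(Real.sqrt 2 * Real.arcsin (y / C)) + K))) :=
  stmt_9_general a b ha U alpha beta W halpha hbeta hW hmse u hu hinv
end

section
/- Let T₁, T₂, T₃ be the sides of a geodesic triangle in ℍ² with vertices Q, Q₁, Q₂, and suppose ϕ is a function whose differential dψ satisfies ∫_{QQ₁} dψ = |QQ₁|, ∫_{Q₂Q} dψ = |QQ₂|, |∫_{Q₁Q₂} dψ| ≤ |Q₁Q₂|, and ∫_{∂Δ} dψ = 0 over the triangle boundary. Then |QQ₁| + |QQ₂| ≤ |Q₁Q₂|, contradicting the strict triangle inequality in ℍ²; hence such a configuration is impossible. -/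
theorem add_le_of_add_add_eq_zero_of_abs_le {a b c r : ℝ} (h : a + b + c = 0) (hb : |b| ≤ r) :
    a + c ≤ r := by
  linarith [neg_le_abs b]

/-- **The triangle contradiction in the Divergence Set Structure Theorem.**
Q, Q₁, Q₂ are the vertices of a nondegenerate geodesic triangle in the hyperbolic plane
(so the strict triangle inequality d(Q,Q₁) + d(Q,Q₂) > d(Q₁,Q₂) holds).  If the flux
integrals of a conjugate differential dψ over the sides satisfy ∫_{QQ₁} dψ = |QQ₁|,
∫_{Q₂Q} dψ = |QQ₂|, |∫_{Q₁Q₂} dψ| ≤ |Q₁Q₂| and ∫_{∂Δ} dψ = 0, then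
|QQ₁| + |QQ₂| ≤ |Q₁Q₂|, contradicting the strict triangle inequality: such a
configuration is impossible. -/
theorem stmt_16 (Q Q₁ Q₂ : UpperHalfPlane)
    (hstrict : dist Q₁ Q₂ < dist Q Q₁ + dist Q Q₂)
    (I₁ I₂ I₃ : ℝ)
    (h1 : I₁ = dist Q Q₁) (h2 : |I₂| ≤ dist Q₁ Q₂) (h3 : I₃ = dist Q Q₂)
    (hclosed : I₁ + I₂ + I₃ = 0) :
    False := by
  have hdegenerate : dist Q Q₁ + dist Q Q₂ ≤ dist Q₁ Q₂ := by
    simpa only [h1, h3] using add_le_of_add_add_eq_zero_of_abs_le hclosed h2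
  exact hstrict.not_ge hdegenerate
end

section
/- Suppose u₁ and u₂ are two solutions of the minimal surface equation in a domain Ω ⊆ ℍ² (of Jenkins–Serrin type) with identical boundary data, with u₁ − u₂ nonconstant and Ω_ε = {u₁ − u₂ > ε} nonempty with regular boundary. Then along the level curve {u₁ − u₂ = ε}, with tangent vector v = Rot_{π/2}(∇(u₁−u₂)), the conjugate differential Ψ = ψ₁ − ψ₂ satisfies dΨ(v) = λ²((W₁+W₂)/2)|η₁ − η₂|² > 0 wherever η₁ ≠ η₂; consequently ∫_{∂Ω_ε} dΨ > 0, contradicting closedness of dΨ, so the solution of the Jenkins–Serrin problem is unique (up to an additive constant when there are no arcs with finite continuous data). -/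
open Set

/-!
Along a level curve of `u₁ - u₂`, the tangent `v` is `λ` times the rotated difference of the
slopes `(α, β)`, so `dΨ(v)` is a rational expression in `α₁, β₁, α₂, β₂, λ`. Clearing the
denominators `W₁, W₂` and using `Wᵢ² = 1 + αᵢ² + βᵢ²` shows that it equals
`λ² (W₁ + W₂)/2 · |η₁ - η₂|²`, where `|η₁ - η₂|² = |(α₁, β₁, 1)/W₁ - (α₂, β₂, 1)/W₂|²`;
comparing third components, `η₁ = η₂` forces `W₁ = W₂` and then `(α₁, β₁) = (α₂, β₂)`.
Hence `t ↦ dΨ(γ'(t))` is continuous, nonnegative, and positive somewhere on `[0, 1]`, so its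
integral cannot vanish.
-/

lemma flux_along_levelCurve_eq {a b c d l s t : ℝ}
    (hs : s = √(1 + a ^ 2 + b ^ 2)) (ht : t = √(1 + c ^ 2 + d ^ 2)) :
    (-(l * b / s) + l * d / t) * (-(l * (b - d))) + (l * a / s - l * c / t) * (l * (a - c)) =
      l ^ 2 * ((s + t) / 2) *
        ((a / s - c / t) ^ 2 + (b / s - d / t) ^ 2 + (1 / s - 1 / t) ^ 2) := by
  have hs0 : s ≠ 0 := by rw [hs]; positivity
  have ht0 : t ≠ 0 := by rw [ht]; positivity
  have hs2 : s ^ 2 = 1 + a ^ 2 + b ^ 2 := by rw [hs]; exact Real.sq_sqrt (by positivity)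
  have ht2 : t ^ 2 = 1 + c ^ 2 + d ^ 2 := by rw [ht]; exact Real.sq_sqrt (by positivity)
  field_simp
  linear_combination (l ^ 2 * t ^ 2 * (t - s)) * hs2 + (l ^ 2 * s ^ 2 * (s - t)) * ht2

lemma normal_dist_sq_pos {a b c d s t : ℝ} (hs : 0 < s) (ht : 0 < t) (hne : (a, b) ≠ (c, d)) :
    0 < (a / s - c / t) ^ 2 + (b / s - d / t) ^ 2 + (1 / s - 1 / t) ^ 2 := by
  have key : a / s - c / t ≠ 0 ∨ b / s - d / t ≠ 0 ∨ 1 / s - 1 / t ≠ 0 := by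
    by_contra! h
    obtain ⟨hac, hbd, hst⟩ := h
    obtain rfl : s = t := by simpa [sub_eq_zero] using hst
    rw [sub_eq_zero, div_left_inj' hs.ne'] at hac hbd
    exact hne (by rw [hac, hbd])
  rcases key with h | h | h <;> have := sq_pos_of_ne_zero h <;>
    linarith [sq_nonneg (a / s - c / t), sq_nonneg (b / s - d / t), sq_nonneg (1 / s - 1 / t)]

lemma continuousOn_flux_along_levelCurve {X : Type*} [TopologicalSpace X] {S : Set X}
    {a b c d l : X → ℝ} (h : ContinuousOn (fun p => (a p, b p, c p, d p, l p)) S) :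
    ContinuousOn (fun p =>
      (-(l p * b p / √(1 + a p ^ 2 + b p ^ 2)) + l p * d p / √(1 + c p ^ 2 + d p ^ 2)) *
          (-(l p * (b p - d p))) +
        (l p * a p / √(1 + a p ^ 2 + b p ^ 2) - l p * c p / √(1 + c p ^ 2 + d p ^ 2)) *
          (l p * (a p - c p))) S := by
  have ha : ContinuousOn a S := h.fst
  have hb : ContinuousOn b S := h.snd.fst
  have hc : ContinuousOn c S := h.snd.snd.fst
  have hd : ContinuousOn d S := h.snd.snd.snd.fst
  have hl : ContinuousOn l S := h.snd.snd.snd.snd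
  fun_prop (disch := intros; positivity)

theorem stmt_18_general (Ω : Set (ℝ × ℝ))
    (lam α₁ β₁ W₁ α₂ β₂ W₂ : ℝ × ℝ → ℝ)
    (hlampos : ∀ p ∈ Ω, 0 < lam p)
    (hW₁ : ∀ p, W₁ p = Real.sqrt (1 + α₁ p ^ 2 + β₁ p ^ 2))
    (hW₂ : ∀ p, W₂ p = Real.sqrt (1 + α₂ p ^ 2 + β₂ p ^ 2))
    (dPsi : ℝ × ℝ → ℝ × ℝ → ℝ)
    (hdPsi : ∀ p v, dPsi p v =
      (-(lam p * β₁ p / W₁ p) + lam p * β₂ p / W₂ p) * v.1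
        + (lam p * α₁ p / W₁ p - lam p * α₂ p / W₂ p) * v.2)
    (v : ℝ × ℝ → ℝ × ℝ)
    (hv : ∀ p, v p = (-(lam p * (β₁ p - β₂ p)), lam p * (α₁ p - α₂ p))) :
    (∀ p ∈ Ω, dPsi p (v p) = (lam p) ^ 2 * ((W₁ p + W₂ p) / 2) *
      ((α₁ p / W₁ p - α₂ p / W₂ p) ^ 2 + (β₁ p / W₁ p - β₂ p / W₂ p) ^ 2 +
        (1 / W₁ p - 1 / W₂ p) ^ 2)) ∧
    (∀ p ∈ Ω, (α₁ p, β₁ p) ≠ (α₂ p, β₂ p) → 0 < dPsi p (v p)) ∧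
    (∀ γ : ℝ → ℝ × ℝ, ContDiffOn ℝ 1 γ (Icc 0 1) → γ 0 = γ 1 →
      (∀ t ∈ Icc (0:ℝ) 1, γ t ∈ Ω) →
      (∀ t ∈ Icc (0:ℝ) 1, deriv γ t = v (γ t)) →
      ContinuousOn (fun p => (α₁ p, β₁ p, α₂ p, β₂ p, lam p)) Ω →
      (∃ t₀ ∈ Icc (0:ℝ) 1, (α₁ (γ t₀), β₁ (γ t₀)) ≠ (α₂ (γ t₀), β₂ (γ t₀))) →
      (∫ t in (0:ℝ)..1, dPsi (γ t) (deriv γ t)) = 0 →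
      False) := by
  have hW₁pos : ∀ p, 0 < W₁ p := fun p => by rw [hW₁]; positivity
  have hW₂pos : ∀ p, 0 < W₂ p := fun p => by rw [hW₂]; positivity
  have flux_eq : ∀ p, dPsi p (v p) = (lam p) ^ 2 * ((W₁ p + W₂ p) / 2) *
      ((α₁ p / W₁ p - α₂ p / W₂ p) ^ 2 + (β₁ p / W₁ p - β₂ p / W₂ p) ^ 2 +
        (1 / W₁ p - 1 / W₂ p) ^ 2) := fun p => by
    rw [hdPsi, hv]
    exact flux_along_levelCurve_eq (hW₁ p) (hW₂ p)
  have flux_nonneg : ∀ p, 0 ≤ dPsi p (v p) := fun p => by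
    have := hW₁pos p; have := hW₂pos p
    rw [flux_eq]; positivity
  have flux_pos : ∀ p ∈ Ω, (α₁ p, β₁ p) ≠ (α₂ p, β₂ p) → 0 < dPsi p (v p) := fun p hp hne => by
    have := hlampos p hp; have := hW₁pos p; have := hW₂pos p
    rw [flux_eq]
    exact mul_pos (by positivity) (normal_dist_sq_pos (hW₁pos p) (hW₂pos p) hne)
  refine ⟨fun p _ => flux_eq p, flux_pos, ?_⟩
  intro γ hγ _ hγΩ hγ' hcont ⟨t₀, ht₀, hne⟩ hint
  have flux_cont : ContinuousOn (fun p => dPsi p (v p)) Ω :=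
    (continuousOn_flux_along_levelCurve hcont).congr fun p _ => by simp only [hdPsi, hv, hW₁, hW₂]
  have integrand_eq : EqOn (fun t => dPsi (γ t) (deriv γ t)) (fun t => dPsi (γ t) (v (γ t)))
      (uIcc 0 1) := fun t ht => by
    rw [uIcc_of_le zero_le_one] at ht
    simp only [hγ' t ht]
  refine (intervalIntegral.integral_pos zero_lt_one (flux_cont.comp hγ.continuousOn hγΩ)
    (fun t _ => flux_nonneg (γ t)) ⟨t₀, ht₀, flux_pos _ (hγΩ t₀ ht₀) hne⟩).ne' ?_
  exact (intervalIntegral.integral_congr integrand_eq).symm.trans hint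

/-- **Uniqueness for the Jenkins–Serrin problem: the level-curve flux computation.**
u₁, u₂ are solutions of the minimal surface equation in Ω ⊆ ℍ² with conjugate
differential dΨ = dψ₁ − dψ₂, and v = Rot_{π/2}(∇(u₁−u₂)) = (−λ(β₁−β₂), λ(α₁−α₂)) is the
tangent vector to the level curves of u₁ − u₂.  Then pointwise
dΨ(v) = λ² ((W₁+W₂)/2) |η₁−η₂|², which is positive wherever η₁ ≠ η₂; consequently, for a
closed level curve γ (the regular boundary ∂Ω_ε of Ω_ε = {u₁−u₂ > ε}, which avoids the
arcs Cₛ and on which dΨ ≠ 0 somewhere) the vanishing of ∫_γ dΨ (closedness of dΨ) is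
contradictory — which forces the Jenkins–Serrin solution to be unique (up to an additive
constant when there are no arcs with finite continuous data). -/
theorem stmt_18 (Ω : Set (ℝ × ℝ)) (hΩopen : IsOpen Ω)
    (lam u₁ u₂ α₁ β₁ W₁ α₂ β₂ W₂ : ℝ × ℝ → ℝ)
    (hlampos : ∀ p ∈ Ω, 0 < lam p)
    (hu₁ : ContDiffOn ℝ 2 u₁ Ω) (hu₂ : ContDiffOn ℝ 2 u₂ Ω)
    (hα₁ : ∀ p ∈ Ω, α₁ p = pdy lam p / (lam p) ^ 2 - pdx u₁ p / lam p)
    (hβ₁ : ∀ p ∈ Ω, β₁ p = -(pdx lam p / (lam p) ^ 2) - pdy u₁ p / lam p)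
    (hα₂ : ∀ p ∈ Ω, α₂ p = pdy lam p / (lam p) ^ 2 - pdx u₂ p / lam p)
    (hβ₂ : ∀ p ∈ Ω, β₂ p = -(pdx lam p / (lam p) ^ 2) - pdy u₂ p / lam p)
    (hW₁ : ∀ p, W₁ p = Real.sqrt (1 + α₁ p ^ 2 + β₁ p ^ 2))
    (hW₂ : ∀ p, W₂ p = Real.sqrt (1 + α₂ p ^ 2 + β₂ p ^ 2))
    (hmse₁ : ∀ p ∈ Ω,
      pdx (fun q => lam q * α₁ q / W₁ q) p + pdy (fun q => lam q * β₁ q / W₁ q) p = 0)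
    (hmse₂ : ∀ p ∈ Ω,
      pdx (fun q => lam q * α₂ q / W₂ q) p + pdy (fun q => lam q * β₂ q / W₂ q) p = 0)
    (dPsi : ℝ × ℝ → ℝ × ℝ → ℝ)
    (hdPsi : ∀ p v, dPsi p v =
      (-(lam p * β₁ p / W₁ p) + lam p * β₂ p / W₂ p) * v.1
        + (lam p * α₁ p / W₁ p - lam p * α₂ p / W₂ p) * v.2)
    (v : ℝ × ℝ → ℝ × ℝ)
    (hv : ∀ p, v p = (-(lam p * (β₁ p - β₂ p)), lam p * (α₁ p - α₂ p))) :
    (∀ p ∈ Ω, dPsi p (v p) = (lam p) ^ 2 * ((W₁ p + W₂ p) / 2) *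
      ((α₁ p / W₁ p - α₂ p / W₂ p) ^ 2 + (β₁ p / W₁ p - β₂ p / W₂ p) ^ 2 +
        (1 / W₁ p - 1 / W₂ p) ^ 2)) ∧
    (∀ p ∈ Ω, (α₁ p, β₁ p) ≠ (α₂ p, β₂ p) → 0 < dPsi p (v p)) ∧
    (∀ γ : ℝ → ℝ × ℝ, ContDiffOn ℝ 1 γ (Icc 0 1) → γ 0 = γ 1 →
      (∀ t ∈ Icc (0:ℝ) 1, γ t ∈ Ω) →
      (∀ t ∈ Icc (0:ℝ) 1, deriv γ t = v (γ t)) →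
      ContinuousOn (fun p => (α₁ p, β₁ p, α₂ p, β₂ p, lam p)) Ω →
      (∃ t₀ ∈ Icc (0:ℝ) 1, (α₁ (γ t₀), β₁ (γ t₀)) ≠ (α₂ (γ t₀), β₂ (γ t₀))) →
      (∫ t in (0:ℝ)..1, dPsi (γ t) (deriv γ t)) = 0 →
      False) :=
  stmt_18_general Ω lam α₁ β₁ W₁ α₂ β₂ W₂ hlampos hW₁ hW₂ dPsi hdPsi v hv
end
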